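/- Let V be a finite type, d a metric on V, and μ, ν probability vectors on V. Then W(μ,ν) = sup { ∑_z f(z)·(μ(z) − ν(z)) : f : V → ℝ with |f(a) − f(b)| ≤ d(a,b) for all a, b ∈ V }; moreover both the infimum over couplings defining W(μ,ν) and this supremum over 1-Lipschitz functions are attained (Kantorovich–Rubinstein duality on a finite metric space). -/

import Mathlib

variable {V : Type*} [Fintype V]

/-- `d` is a metric on `V`. -/
def IsMetric (d : V → V → ℝ) : Prop :=
  (∀ a b, d a b = d b a) ∧ (∀ a b, d a b = 0 ↔ a = b) ∧
  (∀ a b c, d a c ≤ d a b + d b c)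

/-- `q` is a coupling of the probability vectors `μ` and `ν`. -/
def IsCoupling (μ ν : V → ℝ) (q : V → V → ℝ) : Prop :=
  (∀ a b, 0 ≤ q a b) ∧ (∀ a, ∑ b, q a b = μ a) ∧ (∀ b, ∑ a, q a b = ν b)

/-- The transport cost of a coupling. -/
noncomputable def cost (d : V → V → ℝ) (q : V → V → ℝ) : ℝ :=
  ∑ a, ∑ b, d a b * q a b

/-- The L¹-Wasserstein distance on a finite space. -/
noncomputable def Wass (d : V → V → ℝ) (μ ν : V → ℝ) : ℝ :=
  sInf {c | ∃ q : V → V → ℝ, IsCoupling μ ν q ∧ c = cost d q}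

/-!
Both optima are attained by compactness: couplings form a compact set, and so do the 1-Lipschitz
functions vanishing at a base point, which lose nothing since `μ` and `ν` have equal mass. Weak
duality is the identity `∑ f (μ - ν) = ∑ (f a - f b) q a b` for a coupling `q`. Conversely, for
`c` below the optimal cost the point `(μ, ν, c)` lies outside the cone of (marginals, cost) of
nonnegative `q`, which is closed because the total mass of `q` is read off its image. A separating
functional yields potentials `φ a + ψ b ≤ d a b` with value above `c`, and the `d`-transform
`f a = min_b (d a b - ψ b)` turns them into a 1-Lipschitz function doing at least as well.
-/

open Set Filter Topology

theorem isClosed_image_of_isCompact_sublevel {X Y : Type*} [TopologicalSpace X]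
    [TopologicalSpace Y] [T2Space Y] {f : X → Y} (hf : Continuous f) {g : Y → ℝ}
    (hg : Continuous g) {S : Set X} (hS : ∀ c, IsCompact (S ∩ {x | g (f x) ≤ c})) :
    IsClosed (f '' S) := by
  refine closure_subset_iff_isClosed.mp fun y hy => ?_
  have hyK : y ∈ closure (f '' (S ∩ {x | g (f x) ≤ g y + 1})) := by
    refine mem_closure_iff_nhds.mpr fun t ht => ?_
    have hlt : {z | g z < g y + 1} ∈ 𝓝 y :=
      hg.continuousAt.eventually_lt continuousAt_const (lt_add_one _)
    obtain ⟨_, ⟨hzt, hzg⟩, x, hxS, rfl⟩ := mem_closure_iff_nhds.mp hy _ (inter_mem ht hlt)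
    exact ⟨f x, hzt, x, ⟨hxS, (show g (f x) < g y + 1 from hzg).le⟩, rfl⟩
  exact image_mono inter_subset_left (((hS _).image hf).isClosed.closure_subset hyK)

theorem LinearMap.exists_apply_prod_eq_sum {R ι κ : Type*} [CommSemiring R] [Fintype ι]
    [Fintype κ] (F : (ι → R) × (κ → R) × R →ₗ[R] R) :
    ∃ (φ : ι → R) (ψ : κ → R) (t : R), ∀ x y s,
      F (x, y, s) = ∑ i, x i * φ i + ∑ j, y j * ψ j + s * t := by
  classical
  refine ⟨fun i => F (Pi.single i 1, 0, 0), fun j => F (0, Pi.single j 1, 0), F (0, 0, 1),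
    fun x y s => ?_⟩
  have hsplit : ((x, y, s) : (ι → R) × (κ → R) × R) =
      ∑ i, x i • (Pi.single i 1, 0, 0) + ∑ j, y j • (0, Pi.single j 1, 0) + s • (0, 0, 1) := by
    ext <;> simp [Prod.fst_sum, Prod.snd_sum, Finset.sum_apply, Pi.single_apply]
  rw [hsplit]
  simp only [map_add, map_sum, map_smul, smul_eq_mul]

theorem IsMetric.nonneg {X : Type*} {d : X → X → ℝ} (hd : IsMetric d) (a b : X) :
    0 ≤ d a b := by
  linarith [hd.2.2 a b a, (hd.2.1 a a).mpr rfl, hd.1 a b]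

section Couplings

variable {μ ν : V → ℝ} {q : V → V → ℝ}

theorem isCoupling_mul (hμ0 : ∀ z, 0 ≤ μ z) (hμ1 : ∑ z, μ z = 1)
    (hν0 : ∀ z, 0 ≤ ν z) (hν1 : ∑ z, ν z = 1) :
    IsCoupling μ ν (fun a b => μ a * ν b) :=
  ⟨fun a b => mul_nonneg (hμ0 a) (hν0 b), fun a => by rw [← Finset.mul_sum, hν1, mul_one],
    fun b => by rw [← Finset.sum_mul, hμ1, one_mul]⟩

theorem IsCoupling.le_left (hq : IsCoupling μ ν q) (a b : V) : q a b ≤ μ a :=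
  hq.2.1 a ▸ Finset.single_le_sum (fun b' _ => hq.1 a b') (Finset.mem_univ b)

theorem isClosed_setOf_isCoupling : IsClosed {q : V → V → ℝ | IsCoupling μ ν q} := by
  simp only [IsCoupling, ofPred_and, ofPred_forall]
  refine (isClosed_iInter fun a => isClosed_iInter fun b => isClosed_le ?_ ?_).inter
    ((isClosed_iInter fun a => isClosed_eq ?_ ?_).inter
      (isClosed_iInter fun b => isClosed_eq ?_ ?_)) <;> fun_prop

theorem isCompact_setOf_isCoupling : IsCompact {q : V → V → ℝ | IsCoupling μ ν q} :=
  isCompact_Icc.of_isClosed_subset isClosed_setOf_isCoupling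
    fun _ hq => ⟨fun a b => hq.1 a b, fun a b => hq.le_left a b⟩

theorem continuous_cost (d : V → V → ℝ) : Continuous (cost d) := by
  unfold cost; fun_prop

theorem exists_isMinOn_cost (d : V → V → ℝ) (hne : ∃ q, IsCoupling μ ν q) :
    ∃ q, IsCoupling μ ν q ∧ IsMinOn (cost d) {q | IsCoupling μ ν q} q :=
  isCompact_setOf_isCoupling.exists_isMinOn hne (continuous_cost d).continuousOn

theorem wass_eq_cost_of_isMinOn {d : V → V → ℝ} (hq : IsCoupling μ ν q)
    (hmin : IsMinOn (cost d) {q | IsCoupling μ ν q} q) : Wass d μ ν = cost d q :=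
  IsLeast.csInf_eq ⟨⟨q, hq, rfl⟩, by rintro _ ⟨q', hq', rfl⟩; exact hmin hq'⟩

theorem IsCoupling.sum_mul_sub_eq (hq : IsCoupling μ ν q) (f : V → ℝ) :
    ∑ z, f z * (μ z - ν z) = ∑ a, ∑ b, (f a - f b) * q a b := by
  simp only [sub_mul, mul_sub, Finset.sum_sub_distrib, ← hq.2.1, ← hq.2.2, Finset.mul_sum]
  rw [Finset.sum_comm (f := fun a b => f b * q a b)]

theorem IsCoupling.sum_mul_sub_le_cost {d : V → V → ℝ} (hq : IsCoupling μ ν q) {f : V → ℝ}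
    (hf : ∀ a b, f a - f b ≤ d a b) : ∑ z, f z * (μ z - ν z) ≤ cost d q := by
  rw [hq.sum_mul_sub_eq, cost]
  gcongr with a _ b _
  exacts [hq.1 a b, hf a b]

end Couplings

section TransportCone

variable (d : V → V → ℝ)

noncomputable def marginalsCost : (V → V → ℝ) →ₗ[ℝ] (V → ℝ) × (V → ℝ) × ℝ where
  toFun q := (fun a => ∑ b, q a b, fun b => ∑ a, q a b, cost d q)
  map_add' q q' := by
    simp only [cost, Pi.add_apply, mul_add, Finset.sum_add_distrib, Prod.mk_add_mk]; rfl
  map_smul' r q := by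
    simp only [cost, Pi.smul_apply, smul_eq_mul, mul_left_comm _ r, ← Finset.mul_sum,
      RingHom.id_apply, Prod.smul_mk]; rfl

theorem marginalsCost_apply (q : V → V → ℝ) :
    marginalsCost d q = (fun a => ∑ b, q a b, fun b => ∑ a, q a b, cost d q) := rfl

theorem marginalsCost_single [DecidableEq V] (a b : V) :
    marginalsCost d (Pi.single a (Pi.single b 1)) = (Pi.single a 1, Pi.single b 1, d a b) := by
  ext c <;> simp [marginalsCost_apply, cost, Pi.single_apply, ite_apply, apply_ite]

theorem IsCoupling.marginalsCost_eq {μ ν : V → ℝ} {q : V → V → ℝ} (hq : IsCoupling μ ν q) :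
    marginalsCost d q = (μ, ν, cost d q) := by
  rw [marginalsCost_apply, funext hq.2.1, funext hq.2.2]

theorem isClosed_image_marginalsCost_nonneg :
    IsClosed (marginalsCost d '' Ici 0) := by
  refine isClosed_image_of_isCompact_sublevel (marginalsCost d).continuous_of_finiteDimensional
    (g := fun y => ∑ a, y.1 a) (by fun_prop) fun c => ?_
  refine (isCompact_Icc (b := fun _ _ => c)).of_isClosed_subset
    (isClosed_Ici.inter (isClosed_le (by unfold marginalsCost; fun_prop) continuous_const))
    fun q ⟨hq0, hqc⟩ => ⟨hq0, fun a b => ?_⟩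
  calc q a b ≤ ∑ b', q a b' := Finset.single_le_sum (fun b' _ => hq0 a b') (Finset.mem_univ b)
    _ ≤ ∑ a', ∑ b', q a' b' := Finset.single_le_sum (f := fun a' => ∑ b', q a' b')
        (fun a' _ => Finset.sum_nonneg fun b' _ => hq0 a' b') (Finset.mem_univ a)
    _ ≤ c := hqc

noncomputable def transportCone : ProperCone ℝ ((V → ℝ) × (V → ℝ) × ℝ) :=
  ⟨(PointedCone.positive ℝ _).map (marginalsCost d), isClosed_image_marginalsCost_nonneg d⟩

end TransportCone

theorem exists_dual_pair_gt {d : V → V → ℝ} {μ ν : V → ℝ} {q : V → V → ℝ}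
    (hq : IsCoupling μ ν q) (hmin : IsMinOn (cost d) {q | IsCoupling μ ν q} q) {c : ℝ}
    (hc : c < cost d q) :
    ∃ φ ψ : V → ℝ, (∀ a b, φ a + ψ b ≤ d a b) ∧ c < ∑ a, μ a * φ a + ∑ b, ν b * ψ b := by
  classical
  have hmem {q' : V → V → ℝ} (hq' : 0 ≤ q') : marginalsCost d q' ∈ transportCone d :=
    PointedCone.mem_map.mpr ⟨q', hq', rfl⟩
  have hx₀ : (μ, ν, c) ∉ transportCone d := by
    intro hx
    obtain ⟨q', hq'0, hq'⟩ := PointedCone.mem_map.mp hx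
    simp only [marginalsCost_apply, Prod.mk.injEq] at hq'
    obtain ⟨hrow, hcol, hcost⟩ := hq'
    have := hmin (show IsCoupling μ ν q' from ⟨hq'0, congrFun hrow, congrFun hcol⟩)
    simp only [mem_ofPred_eq, hcost] at this
    linarith
  obtain ⟨F, hFC, hFx⟩ := (transportCone d).hyperplane_separation_point hx₀
  obtain ⟨φ, ψ, t, hF⟩ := LinearMap.exists_apply_prod_eq_sum
    (F : (V → ℝ) × (V → ℝ) × ℝ →L[ℝ] ℝ).toLinearMap
  simp only [ContinuousLinearMap.coe_coe] at hF
  have hgen (a b : V) : 0 ≤ φ a + ψ b + d a b * t := by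
    have hsingle : (0 : V → V → ℝ) ≤ Pi.single a (Pi.single b 1) :=
      Pi.single_nonneg.mpr (Pi.single_nonneg.mpr zero_le_one)
    have := hFC _ (hmem hsingle)
    simpa [marginalsCost_single, hF, Pi.single_apply] using this
  have hopt := hFC _ (hmem (fun a b => hq.1 a b))
  rw [hq.marginalsCost_eq d, hF] at hopt
  rw [hF] at hFx
  -- `hopt - hFx` reads `0 < (cost d q - c) * t`.
  have ht : 0 < t := by nlinarith
  refine ⟨fun a => -φ a / t, fun b => -ψ b / t, fun a b => ?_, ?_⟩
  · rw [← add_div, div_le_iff₀ ht]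
    linarith [hgen a b]
  · simp only [mul_div_assoc', mul_neg]
    rw [← Finset.sum_div, ← Finset.sum_div, ← add_div, lt_div_iff₀ ht,
      Finset.sum_neg_distrib, Finset.sum_neg_distrib]
    linarith

section Potentials

variable {d : V → V → ℝ} {μ ν : V → ℝ}

theorem IsMetric.exists_lipschitz_of_dual_pair [Nonempty V] (hd : IsMetric d)
    (hμ0 : ∀ z, 0 ≤ μ z) (hν0 : ∀ z, 0 ≤ ν z) {φ ψ : V → ℝ} (h : ∀ a b, φ a + ψ b ≤ d a b) :
    ∃ f : V → ℝ, (∀ a b, |f a - f b| ≤ d a b) ∧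
      ∑ a, μ a * φ a + ∑ b, ν b * ψ b ≤ ∑ z, f z * (μ z - ν z) := by
  set f : V → ℝ := fun a => Finset.univ.inf' Finset.univ_nonempty fun b => d a b - ψ b
  have hf_le (a b : V) : f a ≤ d a b - ψ b := Finset.inf'_le _ (Finset.mem_univ b)
  have hφ (a : V) : φ a ≤ f a := Finset.le_inf' _ _ fun b _ => by linarith [h a b]
  have hψ (b : V) : f b ≤ -ψ b := by simpa [(hd.2.1 b b).mpr rfl] using hf_le b b
  have hlip (a a' : V) : f a - f a' ≤ d a a' := by
    obtain ⟨b, -, hb⟩ := Finset.exists_mem_eq_inf' Finset.univ_nonempty fun b => d a' b - ψ b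
    linarith [hf_le a b, hd.2.2 a a' b, show f a' = d a' b - ψ b from hb]
  refine ⟨f, fun a b => abs_sub_le_iff.mpr ⟨hlip a b, hd.1 a b ▸ hlip b a⟩, ?_⟩
  calc ∑ a, μ a * φ a + ∑ b, ν b * ψ b ≤ ∑ z, μ z * f z + ∑ z, ν z * -f z :=
        add_le_add (Finset.sum_le_sum fun z _ => mul_le_mul_of_nonneg_left (hφ z) (hμ0 z))
          (Finset.sum_le_sum fun z _ => mul_le_mul_of_nonneg_left (by linarith [hψ z]) (hν0 z))
    _ = ∑ z, f z * (μ z - ν z) := by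
        simp only [mul_neg, Finset.sum_neg_distrib, ← sub_eq_add_neg, mul_comm (f _), sub_mul,
          Finset.sum_sub_distrib]

theorem IsMetric.exists_isMaxOn_sum_mul_sub [Nonempty V] (hd : IsMetric d)
    (hμν : ∑ z, μ z = ∑ z, ν z) :
    ∃ f : V → ℝ, (∀ a b, |f a - f b| ≤ d a b) ∧ ∀ g : V → ℝ, (∀ a b, |g a - g b| ≤ d a b) →
      ∑ z, g z * (μ z - ν z) ≤ ∑ z, f z * (μ z - ν z) := by
  obtain ⟨x₀⟩ := ‹Nonempty V›
  have hcompact : IsCompact {f : V → ℝ | (∀ a b, |f a - f b| ≤ d a b) ∧ f x₀ = 0} := by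
    refine (isCompact_Icc (a := fun a => -d a x₀) (b := fun a => d a x₀)).of_isClosed_subset
      ?_ fun f ⟨hf, hf0⟩ => ?_
    · simp only [ofPred_and, ofPred_forall]
      exact (isClosed_iInter fun a => isClosed_iInter fun b => isClosed_le (by fun_prop)
        continuous_const).inter (isClosed_eq (continuous_apply x₀) continuous_const)
    · have hbound (a : V) := abs_le.mp (by simpa [hf0] using hf a x₀)
      exact ⟨fun a => (hbound a).1, fun a => (hbound a).2⟩
  obtain ⟨f, hf, hmax⟩ := hcompact.exists_isMaxOn
    ⟨0, fun a b => by simpa using hd.nonneg a b, rfl⟩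
    (by fun_prop : Continuous fun f : V → ℝ => ∑ z, f z * (μ z - ν z)).continuousOn
  refine ⟨f, hf.1, fun g hg => ?_⟩
  have hshift : ∑ z, (g z - g x₀) * (μ z - ν z) = ∑ z, g z * (μ z - ν z) := by
    simp [sub_mul, Finset.sum_sub_distrib, ← Finset.mul_sum, hμν]
  exact hshift ▸ hmax ⟨fun a b => by simpa using hg a b, sub_self _⟩

end Potentials

theorem kantorovich_rubinstein_duality_finite
    (d : V → V → ℝ) (hd : IsMetric d) (μ ν : V → ℝ)
    (hμ0 : ∀ z, 0 ≤ μ z) (hμ1 : ∑ z, μ z = 1)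
    (hν0 : ∀ z, 0 ≤ ν z) (hν1 : ∑ z, ν z = 1) :
    Wass d μ ν =
      sSup {s | ∃ f : V → ℝ, (∀ a b, |f a - f b| ≤ d a b) ∧
        s = ∑ z, f z * (μ z - ν z)} ∧
    (∃ q : V → V → ℝ, IsCoupling μ ν q ∧ cost d q = Wass d μ ν) ∧
    (∃ f : V → ℝ, (∀ a b, |f a - f b| ≤ d a b) ∧
      ∑ z, f z * (μ z - ν z) = Wass d μ ν) := by
  have : Nonempty V := by
    by_contra hV
    simp [not_nonempty_iff.mp hV] at hμ1
  obtain ⟨q, hq, hmin⟩ := exists_isMinOn_cost d ⟨_, isCoupling_mul hμ0 hμ1 hν0 hν1⟩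
  obtain ⟨f, hf, hfmax⟩ := hd.exists_isMaxOn_sum_mul_sub (hμ1.trans hν1.symm)
  have hW := wass_eq_cost_of_isMinOn hq hmin
  have hval : ∑ z, f z * (μ z - ν z) = Wass d μ ν := by
    rw [hW]
    refine le_antisymm (hq.sum_mul_sub_le_cost fun a b => (le_abs_self _).trans (hf a b))
      (le_of_forall_lt fun c hc => ?_)
    obtain ⟨φ, ψ, hφψ, hc⟩ := exists_dual_pair_gt hq hmin hc
    obtain ⟨g, hg, hgφψ⟩ := hd.exists_lipschitz_of_dual_pair hμ0 hν0 hφψ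
    exact hc.trans_le (hgφψ.trans (hfmax g hg))
  refine ⟨Eq.symm (IsGreatest.csSup_eq ⟨⟨f, hf, hval.symm⟩, ?_⟩), ⟨q, hq, hW.symm⟩, f, hf, hval⟩
  rintro _ ⟨g, hg, rfl⟩
  exact hval ▸ hfmax g hg
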